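/- arXiv:2010.06842 — 2 statements merged into one kernel-verified Lean document; each statement's English description precedes it below -/
import Mathlib

section
/- Let c ∈ ℝ, let f : ℝ → ℝ be differentiable at c, and let X be a population. Then for every ε > 0 there exists N such that every population Z with Avg(Z) = c and |Z| ≥ N satisfies |(f(Avg(X + Z)) − f(c))·|Z| − f′(c)·V_CLc(X)| < ε. -/
open Filter Topology

/-- The size of a population: total number of welfare subjects. -/
noncomputable def psize (X : ℝ →₀ ℕ) : ℕ := X.sum fun _ n => n

/-- Total welfare of a population. -/
noncomputable def ptot (X : ℝ →₀ ℕ) : ℝ := X.sum fun w n => (n : ℝ) * w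

/-- Average welfare of a population. -/
noncomputable def pavg (X : ℝ →₀ ℕ) : ℝ := ptot X / (psize X : ℝ)

/-- Critical-level utilitarian value with critical level `c`. -/
noncomputable def vcl (c : ℝ) (X : ℝ →₀ ℕ) : ℝ := ptot X - c * (psize X : ℝ)

lemma psize_add' (X Y : ℝ →₀ ℕ) : psize (X + Y) = psize X + psize Y := by
  unfold psize
  exact Finsupp.sum_add_index (fun _ _ => rfl) (fun _ _ _ _ => rfl)

lemma ptot_add' (X Y : ℝ →₀ ℕ) : ptot (X + Y) = ptot X + ptot Y := by
  unfold ptot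
  exact Finsupp.sum_add_index (by simp) (by intro w _ m n; push_cast; ring)

lemma psize_pos' {X : ℝ →₀ ℕ} (hX : X ≠ 0) : 0 < psize X := by
  rcases Finsupp.ne_iff.mp hX with ⟨w, hw⟩
  simp only [Finsupp.coe_zero, Pi.zero_apply] at hw
  have hmem : w ∈ X.support := Finsupp.mem_support_iff.mpr hw
  have : X w ≤ psize X := Finset.single_le_sum (f := fun a => X a) (fun _ _ => Nat.zero_le _) hmem
  omega

lemma key_tendsto (c : ℝ) (f : ℝ → ℝ) (hf : DifferentiableAt ℝ f c) (t s : ℝ) (hs : 0 < s) :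
    Tendsto (fun n : ℕ => (f ((t + c * n) / (s + n)) - f c) * n) atTop
      (𝓝 (deriv f c * (t - c * s))) := by
  set V : ℝ := t - c * s with hV
  have hsn : ∀ n : ℕ, (0:ℝ) < s + n := fun n => by positivity
  have hdiff : ∀ n : ℕ, (t + c * n) / (s + n) - c = V / (s + n) := by
    intro n
    have h := (hsn n).ne'
    field_simp
    ring
  by_cases hV0 : V = 0
  · have hφ : ∀ n : ℕ, (t + c * n) / (s + n) = c := by
      intro n
      have h := hdiff n
      rw [hV0, zero_div] at h
      linarith
    simp only [hφ, ← hV, hV0, sub_self, zero_mul, mul_zero]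
    exact tendsto_const_nhds
  · have hlim : Tendsto (fun n : ℕ => (t + c * n) / (s + n)) atTop (𝓝[≠] c) := by
      rw [tendsto_nhdsWithin_iff]
      constructor
      · have h1 : Tendsto (fun n : ℕ => s + (n:ℝ)) atTop atTop :=
          tendsto_atTop_add_const_left _ _ tendsto_natCast_atTop_atTop
        have h2 : Tendsto (fun n : ℕ => V / (s + (n:ℝ))) atTop (𝓝 0) :=
          tendsto_const_nhds.div_atTop h1
        have h3 : Tendsto (fun n : ℕ => c + V / (s + (n:ℝ))) atTop (𝓝 (c + 0)) :=
          tendsto_const_nhds.add h2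
        rw [add_zero] at h3
        refine h3.congr fun n => ?_
        have := hdiff n; linarith
      · refine Eventually.of_forall fun n => ?_
        simp only [Set.mem_compl_iff, Set.mem_singleton_iff]
        intro h
        have h2 := hdiff n
        rw [h, sub_self] at h2
        exact hV0 ((div_eq_zero_iff.mp h2.symm).resolve_right (hsn n).ne')
    have hslope : Tendsto (fun n : ℕ => slope f c ((t + c * n) / (s + n))) atTop
        (𝓝 (deriv f c)) :=
      (hasDerivAt_iff_tendsto_slope.mp hf.hasDerivAt).comp hlim
    have hratio : Tendsto (fun n : ℕ => (n:ℝ) / ((n:ℝ) + s)) atTop (𝓝 1) :=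
      tendsto_natCast_div_add_atTop s
    have hcomb : Tendsto (fun n : ℕ =>
        slope f c ((t + c * n) / (s + n)) * V * ((n:ℝ) / ((n:ℝ) + s))) atTop
        (𝓝 (deriv f c * V * 1)) :=
      (hslope.mul tendsto_const_nhds).mul hratio
    rw [mul_one] at hcomb
    refine hcomb.congr fun n => ?_
    rw [slope_def_field, hdiff n]
    have h1 : s + (n:ℝ) ≠ 0 := (hsn n).ne'
    field_simp
    ring

theorem stmt_4 (c : ℝ) (f : ℝ → ℝ) (hf : DifferentiableAt ℝ f c)
    (X : ℝ →₀ ℕ) (hX : X ≠ 0) :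
    ∀ ε > (0 : ℝ), ∃ N : ℕ, ∀ Z : ℝ →₀ ℕ, Z ≠ 0 → pavg Z = c → psize Z ≥ N →
      |(f (pavg (X + Z)) - f c) * (psize Z : ℝ) - deriv f c * vcl c X| < ε := by
  intro ε hε
  have hs : (0:ℝ) < (psize X : ℝ) := by exact_mod_cast psize_pos' hX
  have := key_tendsto c f hf (ptot X) (psize X) hs
  rw [Metric.tendsto_atTop] at this
  obtain ⟨N, hN⟩ := this ε hε
  refine ⟨N, fun Z hZ hZavg hZN => ?_⟩
  have hz : (0:ℝ) < (psize Z : ℝ) := by exact_mod_cast psize_pos' hZ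
  have htotZ : ptot Z = c * (psize Z : ℝ) := by
    rw [pavg, div_eq_iff hz.ne'] at hZavg
    linarith [hZavg]
  have hpavg : pavg (X + Z) = (ptot X + c * (psize Z : ℝ)) / ((psize X : ℝ) + (psize Z : ℝ)) := by
    rw [pavg, ptot_add', psize_add', htotZ]
    push_cast
    ring_nf
  have h := hN (psize Z) hZN
  rw [Real.dist_eq] at h
  rw [hpavg, vcl]
  exact h
end

section
/- Let β ∈ (0, 1) and define the geometric rank-discounted value V(X) = Σ_{k=1}^{|X|} β^k·X_k. Let W ⊆ ℝ, and let Z₀ be a population that covers W, meaning: (a) for all w₁, w₂ ∈ W with w₁ < w₂ there is z with Z₀(z) ≠ 0 and w₁ < z < w₂; (b) there is z with Z₀(z) ≠ 0 and z < w for all w ∈ W; (c) there is z with Z₀(z) ≠ 0 and z > w for all w ∈ W. Let c be the greatest welfare level occurring in Z₀ (i.e., the maximum of the finite set {z : Z₀(z) ≠ 0}). For populations X and Y, say X ≻_CLLc Y if, letting m = max(|X|, |Y|), X̃ be X with m − |X| additional subjects at welfare level c, and Ỹ be Y with m − |Y| additional subjects at welfare level c (so |X̃| = |Ỹ| = m),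 there exists k ∈ {1, …, m} with X̃_j = Ỹ_j for all j < k and X̃_k > Ỹ_k. Then for all populations X and Y supported on W (i.e., X(w) ≠ 0 implies w ∈ W, and likewise for Y) with X ≻_CLLc Y, there exists N ∈ ℕ such that V(X + n·Z₀) > V(Y + n·Z₀) for every integer n ≥ N. -/
/-- The welfare levels of a population, with multiplicity, sorted in increasing order.
The `k`-th worst-off individual (1-indexed) has welfare `(ranked X).getD (k-1) 0`. -/
noncomputable def ranked (X : ℝ →₀ ℕ) : List ℝ :=
  (Finsupp.toMultiset X).sort (· ≤ ·)

/-- Rank-discounted value: `Σ_{k=1}^{|X|} f(k) · X_k`, where `X_k` is the `k`-th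
smallest welfare level of `X` counted with multiplicity. -/
noncomputable def vrd (f : ℕ → ℝ) (X : ℝ →₀ ℕ) : ℝ :=
  ∑ k ∈ Finset.range (ranked X).length, f (k + 1) * (ranked X).getD k 0

/-- Pad a population `X` up to size `m` with extra welfare subjects at level `c`. -/
noncomputable def padTo (X : ℝ →₀ ℕ) (m : ℕ) (c : ℝ) : ℝ →₀ ℕ :=
  X + Finsupp.single c (m - psize X)

/-- Critical-level leximin betterness at critical level `c`: after padding both
populations with subjects at level `c` to a common size `m`, the first rank at which
they differ favours `X`. -/
def CLLBetter (c : ℝ) (X Y : ℝ →₀ ℕ) : Prop :=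
  ∃ k < max (psize X) (psize Y),
    (∀ j < k, (ranked (padTo X (max (psize X) (psize Y)) c)).getD j 0
            = (ranked (padTo Y (max (psize X) (psize Y)) c)).getD j 0) ∧
    (ranked (padTo X (max (psize X) (psize Y)) c)).getD k 0
      > (ranked (padTo Y (max (psize X) (psize Y)) c)).getD k 0

/-!
Along a grid `s₀ < s₁ < ⋯ < s_r` containing every welfare level involved, the geometric
rank-discounted value of a sorted list of length `M` is the layer-cake sum
`s₀ G(0) + Σᵢ (sᵢ₊₁ - sᵢ) G(#{entries ≤ sᵢ})`, where `G(t) = Σ_{t ≤ j < M} β ^ (j + 1)`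
is a geometric tail; so two populations of equal size are compared threshold by threshold.

Pad `X` and `Y` with subjects at `c` to a common size `m`. Since `c` is the top level, the padding
subjects rank last and change `V (· + n • Z₀)` only by `O(β ^ (n |Z₀|))`. Let `b < a` be the
entries of the padded `Y` and `X` at the first rank where they differ, and `t` the number of
subjects of `Z₀` at levels `≤ b`. Below `a` the padded `X` never has more subjects under a
threshold than the padded `Y`, and under `b` it has strictly fewer, a gain of order
`β ^ (m + n t)`. The covering hypotheses put a level of `Z₀` in `(b, a]`, so under any threshold
`≥ a` both populations have at least `n (t + 1)` subjects and any loss is `O(β ^ (n (t + 1)))`.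
For large `n` the gain wins.
-/

open Finset

noncomputable def geomTail (β : ℝ) (t M : ℕ) : ℝ := ∑ j ∈ Ico t M, β ^ (j + 1)

noncomputable def rankSum (β : ℝ) (L : List ℝ) : ℝ :=
  ∑ j ∈ range L.length, β ^ (j + 1) * L.getD j 0

lemma vrd_pow_eq_rankSum (β : ℝ) (X : ℝ →₀ ℕ) : vrd (β ^ ·) X = rankSum β (ranked X) := rfl

section GeomTail

variable {β : ℝ}

lemma geomTail_nonneg (hβ : 0 ≤ β) (t M : ℕ) : 0 ≤ geomTail β t M :=
  sum_nonneg fun _ _ => pow_nonneg hβ _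

lemma geomTail_antitone (hβ : 0 ≤ β) (M : ℕ) : Antitone (geomTail β · M) :=
  fun _ _ h => sum_le_sum_of_subset_of_nonneg (Ico_subset_Ico h le_rfl)
    fun _ _ _ => pow_nonneg hβ _

lemma pow_le_geomTail_sub (hβ : 0 ≤ β) {x y M : ℕ} (hxy : x < y) (hyM : y ≤ M) :
    β ^ y ≤ geomTail β x M - geomTail β y M := by
  have hstep : geomTail β (y - 1) M = β ^ y + geomTail β y M := by
    rw [geomTail, sum_eq_sum_Ico_succ_bot (by omega), Nat.sub_add_cancel (by omega)]
    rfl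
  linarith [geomTail_antitone hβ M (show x ≤ y - 1 by omega)]

lemma geomTail_le (hβ0 : 0 ≤ β) (hβ1 : β < 1) (t M : ℕ) :
    geomTail β t M ≤ β ^ t / (1 - β) :=
  calc geomTail β t M = β * ∑ j ∈ Ico t M, β ^ j := by
        simp only [geomTail, mul_sum, pow_succ']
    _ ≤ 1 * (β ^ t / (1 - β)) :=
        mul_le_mul hβ1.le (geom_sum_Ico_le_of_lt_one hβ0 hβ1)
          (sum_nonneg fun _ _ => pow_nonneg hβ0 _) zero_le_one
    _ = β ^ t / (1 - β) := one_mul _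

end GeomTail

section SortedList

lemma getD_le_iff_lt_countP :
    ∀ {L : List ℝ}, L.Pairwise (· ≤ ·) → ∀ (s : ℝ) {j : ℕ}, j < L.length →
      (L.getD j 0 ≤ s ↔ j < L.countP (· ≤ s))
  | [], _, _, _, hj => absurd hj (Nat.not_lt_zero _)
  | x :: xs, hL, s, j, hj => by
    rw [List.pairwise_cons] at hL
    by_cases hx : x ≤ s
    · rw [List.countP_cons_of_pos (by simpa using hx)]
      cases j with
      | zero => simpa using hx
      | succ j =>
        rw [List.getD_cons_succ, getD_le_iff_lt_countP hL.2 s (by simpa using hj)]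
        omega
    · have hxs : xs.countP (· ≤ s) = 0 :=
        List.countP_eq_zero.mpr fun y hy hys => hx ((hL.1 y hy).trans (by simpa using hys))
      rw [List.countP_cons_of_neg (by simpa using hx), hxs]
      refine iff_of_false (fun h => hx ?_) (Nat.not_lt_zero _)
      cases j with
      | zero => simpa using h
      | succ j =>
        rw [List.getD_cons_succ, List.getD_eq_getElem _ _ (by simpa using hj)] at h
        exact (hL.1 _ (List.getElem_mem _)).trans h

lemma getD_mono_of_pairwise {L : List ℝ} (hL : L.Pairwise (· ≤ ·)) {i j : ℕ} (hij : i ≤ j)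
    (hj : j < L.length) : L.getD i 0 ≤ L.getD j 0 := by
  rw [List.getD_eq_getElem L 0 (hij.trans_lt hj), List.getD_eq_getElem L 0 hj]
  exact hL.sortedLE.monotone_get (show (⟨i, _⟩ : Fin L.length) ≤ ⟨j, hj⟩ from hij)

lemma countP_le_countP_of_getD_eq {R T : List ℝ} (hR : R.Pairwise (· ≤ ·))
    (hT : T.Pairwise (· ≤ ·)) {k : ℕ} (hkT : k < T.length)
    (hpre : ∀ j < k, R.getD j 0 = T.getD j 0) {s : ℝ} (hs : s < R.getD k 0) :
    R.countP (· ≤ s) ≤ T.countP (· ≤ s) := by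
  rcases Nat.eq_zero_or_pos (R.countP (· ≤ s)) with h0 | hpos
  · omega
  have hlen : R.countP (· ≤ s) - 1 < R.length := by
    have := R.countP_le_length (p := (· ≤ s)); omega
  have hlast : R.getD (R.countP (· ≤ s) - 1) 0 ≤ s :=
    (getD_le_iff_lt_countP hR s hlen).mpr (by omega)
  have hbelow : R.countP (· ≤ s) - 1 < k := by
    by_contra! h
    linarith [getD_mono_of_pairwise hR h hlen]
  have := (getD_le_iff_lt_countP hT s (hbelow.trans hkT)).mp (hpre _ hbelow ▸ hlast)
  omega

lemma countP_lt_countP_of_mem {L : List ℝ} {p q : ℝ → Bool}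
    (hpq : ∀ x ∈ L, p x → q x) {x : ℝ} (hx : x ∈ L) (hqx : q x) (hpx : ¬ p x) :
    L.countP p < L.countP q := by
  induction L with
  | nil => simp at hx
  | cons y ys ih =>
    have hmono := List.countP_mono_left fun z hz => hpq z (List.mem_cons_of_mem _ hz)
    rw [List.countP_cons, List.countP_cons]
    rcases List.mem_cons.mp hx with rfl | hx'
    · rw [if_pos hqx, if_neg hpx]
      omega
    · have := ih (fun z hz => hpq z (List.mem_cons_of_mem _ hz)) hx'
      have : (if p y then 1 else 0) ≤ (if q y then 1 else 0) := by
        by_cases h : p y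
        · simp [h, hpq y List.mem_cons_self h]
        · simp [h]
      omega

end SortedList

section LayerCake

lemma eq_getD_zero_add_sum_gaps {SL : List ℝ} (hSL : SL.Pairwise (· < ·)) {v : ℝ}
    (hv : v ∈ SL) :
    v = SL.getD 0 0 + ∑ i ∈ range (SL.length - 1),
      (SL.getD (i + 1) 0 - SL.getD i 0) * (if SL.getD i 0 < v then 1 else 0) := by
  obtain ⟨t, ht, rfl⟩ := List.mem_iff_getElem.mp hv
  have hlt : ∀ i < SL.length, (SL.getD i 0 < SL[t] ↔ i < t) := fun i hi => by
    rw [List.getD_eq_getElem SL 0 hi]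
    exact hSL.sortedLT.strictMono_get.lt_iff_lt (a := ⟨i, hi⟩) (b := ⟨t, ht⟩)
  have hsum : ∑ i ∈ range (SL.length - 1),
      (SL.getD (i + 1) 0 - SL.getD i 0) * (if SL.getD i 0 < SL[t] then 1 else 0)
      = ∑ i ∈ range t, (SL.getD (i + 1) 0 - SL.getD i 0) := by
    rw [← sum_range_add_sum_Ico _ (show t ≤ SL.length - 1 by omega)]
    rw [sum_eq_zero (s := Ico _ _) fun i hi => by
      rw [mem_Ico] at hi; rw [if_neg (by rw [hlt i (by omega)]; omega), mul_zero]]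
    rw [add_zero]
    exact sum_congr rfl fun i hi => by
      rw [mem_range] at hi; rw [if_pos ((hlt i (by omega)).mpr hi), mul_one]
  rw [hsum, sum_range_sub (fun i => SL.getD i 0), List.getD_eq_getElem SL 0 ht]
  ring

lemma sum_pow_mul_indicator_eq_geomTail (β : ℝ) {L : List ℝ} (hL : L.Pairwise (· ≤ ·))
    (s : ℝ) :
    ∑ j ∈ range L.length, β ^ (j + 1) * (if s < L.getD j 0 then 1 else 0)
      = geomTail β (L.countP (· ≤ s)) L.length := by
  have hcount := L.countP_le_length (p := (· ≤ s))
  rw [geomTail, ← sum_range_add_sum_Ico _ hcount]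
  rw [sum_eq_zero (s := range _) fun j hj => by
    rw [mem_range] at hj
    rw [if_neg (not_lt.mpr ((getD_le_iff_lt_countP hL s (by omega)).mpr hj)), mul_zero]]
  rw [zero_add]
  exact sum_congr rfl fun j hj => by
    rw [mem_Ico] at hj
    rw [if_pos (not_le.mp fun h => by
      have := (getD_le_iff_lt_countP hL s hj.2).mp h; omega), mul_one]

lemma rankSum_eq_layerCake (β : ℝ) {SL L : List ℝ} (hSL : SL.Pairwise (· < ·))
    (hL : L.Pairwise (· ≤ ·)) (hmem : ∀ x ∈ L, x ∈ SL) :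
    rankSum β L = SL.getD 0 0 * geomTail β 0 L.length
        + ∑ i ∈ range (SL.length - 1),
            (SL.getD (i + 1) 0 - SL.getD i 0)
              * geomTail β (L.countP (· ≤ SL.getD i 0)) L.length := by
  have hentry : ∀ j ∈ range L.length, β ^ (j + 1) * L.getD j 0
      = β ^ (j + 1) * SL.getD 0 0 + ∑ i ∈ range (SL.length - 1),
          (SL.getD (i + 1) 0 - SL.getD i 0)
            * (β ^ (j + 1) * (if SL.getD i 0 < L.getD j 0 then 1 else 0)) := by
    intro j hj
    have hLj : L.getD j 0 ∈ SL := hmem _ (by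
      rw [List.getD_eq_getElem L 0 (mem_range.mp hj)]; exact List.getElem_mem _)
    conv_lhs => rw [eq_getD_zero_add_sum_gaps hSL hLj]
    rw [mul_add, mul_sum]
    congr 1
    exact sum_congr rfl fun _ _ => by ring
  rw [rankSum, sum_congr rfl hentry, sum_add_distrib, sum_comm]
  congr 1
  · rw [geomTail, ← range_eq_Ico, mul_sum]
    exact sum_congr rfl fun _ _ => mul_comm _ _
  · exact sum_congr rfl fun i _ => by rw [← mul_sum, sum_pow_mul_indicator_eq_geomTail β hL]

lemma rankSum_sub_rankSum_eq (β : ℝ) {SL A B : List ℝ} (hSL : SL.Pairwise (· < ·))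
    (hA : A.Pairwise (· ≤ ·)) (hB : B.Pairwise (· ≤ ·)) (hAB : A.length = B.length)
    (hmemA : ∀ x ∈ A, x ∈ SL) (hmemB : ∀ x ∈ B, x ∈ SL) :
    rankSum β A - rankSum β B = ∑ i ∈ range (SL.length - 1), (SL.getD (i + 1) 0 - SL.getD i 0) *
      (geomTail β (A.countP (· ≤ SL.getD i 0)) A.length
        - geomTail β (B.countP (· ≤ SL.getD i 0)) A.length) := by
  rw [rankSum_eq_layerCake β hSL hA hmemA, rankSum_eq_layerCake β hSL hB hmemB, hAB,
    add_sub_add_left_eq_sub, ← sum_sub_distrib]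
  exact sum_congr rfl fun _ _ => (mul_sub _ _ _).symm

end LayerCake

section Population

lemma psize_eq_card (A : ℝ →₀ ℕ) : psize A = Multiset.card (Finsupp.toMultiset A) :=
  (Finsupp.card_toMultiset A).symm

lemma psize_add (A B : ℝ →₀ ℕ) : psize (A + B) = psize A + psize B := by
  simp only [psize_eq_card, map_add, Multiset.card_add]

lemma psize_nsmul (n : ℕ) (A : ℝ →₀ ℕ) : psize (n • A) = n * psize A := by
  simp only [psize_eq_card, map_nsmul, Multiset.card_nsmul]

lemma psize_single (c : ℝ) (d : ℕ) : psize (Finsupp.single c d) = d := by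
  simp [psize_eq_card, Finsupp.toMultiset_single]

lemma coe_ranked (A : ℝ →₀ ℕ) : (ranked A : Multiset ℝ) = Finsupp.toMultiset A :=
  Multiset.sort_eq _ _

lemma ranked_pairwise (A : ℝ →₀ ℕ) : (ranked A).Pairwise (· ≤ ·) :=
  Multiset.pairwise_sort _ _

lemma length_ranked (A : ℝ →₀ ℕ) : (ranked A).length = psize A := by
  rw [psize_eq_card, ← coe_ranked, Multiset.coe_card]

lemma mem_ranked {A : ℝ →₀ ℕ} {x : ℝ} : x ∈ ranked A ↔ x ∈ A.support := by
  rw [ranked, Multiset.mem_sort, Finsupp.mem_toMultiset]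

lemma countP_ranked (p : ℝ → Prop) [DecidablePred p] (A : ℝ →₀ ℕ) :
    (ranked A).countP (fun x => decide (p x)) = (Finsupp.toMultiset A).countP p := by
  rw [← coe_ranked, Multiset.coe_countP]

lemma countP_ranked_add_nsmul (p : ℝ → Prop) [DecidablePred p] (A Z : ℝ →₀ ℕ) (n : ℕ) :
    (ranked (A + n • Z)).countP (fun x => decide (p x))
      = (ranked A).countP (fun x => decide (p x))
        + n * (ranked Z).countP (fun x => decide (p x)) := by
  simp only [countP_ranked, map_add, map_nsmul, Multiset.countP_add, Multiset.countP_nsmul]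

lemma ranked_add_single {A : ℝ →₀ ℕ} {c : ℝ} (hc : ∀ x ∈ A.support, x ≤ c) (d : ℕ) :
    ranked (A + Finsupp.single c d) = ranked A ++ List.replicate d c := by
  refine List.Perm.eq_of_pairwise' (ranked_pairwise _) ?_ ?_
  · refine List.pairwise_append.mpr ⟨ranked_pairwise A, List.pairwise_replicate.mpr (Or.inr le_rfl),
      fun x hx y hy => List.eq_of_mem_replicate hy ▸ hc x (mem_ranked.mp hx)⟩
  · rw [← Multiset.coe_eq_coe, ← Multiset.coe_add, coe_ranked, coe_ranked, map_add,
      Finsupp.toMultiset_single, Multiset.coe_replicate, Multiset.nsmul_singleton]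

lemma rankSum_append_replicate (β c : ℝ) (L : List ℝ) (d : ℕ) :
    rankSum β (L ++ List.replicate d c)
      = rankSum β L + c * geomTail β L.length (L.length + d) := by
  rw [rankSum, rankSum, List.length_append, List.length_replicate, range_eq_Ico,
    ← sum_Ico_consecutive _ (Nat.zero_le L.length) (Nat.le_add_right _ d), ← range_eq_Ico,
    geomTail, mul_sum]
  congr 1
  · exact sum_congr rfl fun j hj => by rw [List.getD_append _ _ _ _ (mem_range.mp hj)]
  · refine sum_congr rfl fun j hj => ?_
    have hj' := mem_Ico.mp hj
    rw [List.getD_append_right _ _ _ _ hj'.1,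
      List.getD_eq_getElem _ 0 (by rw [List.length_replicate]; omega), List.getElem_replicate]
    ring

lemma abs_rankSum_add_single_sub_le {β : ℝ} (hβ0 : 0 ≤ β) (hβ1 : β < 1) {A : ℝ →₀ ℕ} {c : ℝ}
    (hc : ∀ x ∈ A.support, x ≤ c) (d : ℕ) {N : ℕ} (hN : N ≤ psize A) :
    |rankSum β (ranked (A + Finsupp.single c d)) - rankSum β (ranked A)|
      ≤ |c| * (β ^ N / (1 - β)) := by
  rw [ranked_add_single hc, rankSum_append_replicate, add_sub_cancel_left, abs_mul,
    abs_of_nonneg (geomTail_nonneg hβ0 _ _), length_ranked]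
  gcongr
  exact (geomTail_le hβ0 hβ1 _ _).trans
    (div_le_div_of_nonneg_right (pow_le_pow_of_le_one hβ0 hβ1.le hN) (by linarith))

lemma getD_mem_support {A : ℝ →₀ ℕ} {j : ℕ} (hj : j < psize A) :
    (ranked A).getD j 0 ∈ A.support := by
  rw [List.getD_eq_getElem _ _ (by rwa [length_ranked])]
  exact mem_ranked.mp (List.getElem_mem _)

lemma support_add_nsmul_subset (A Z : ℝ →₀ ℕ) (n : ℕ) :
    (A + n • Z).support ⊆ A.support ∪ Z.support :=
  Finsupp.support_add.trans (union_subset_union_right Finsupp.support_smul)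

lemma psize_padTo {A : ℝ →₀ ℕ} {m : ℕ} (hA : psize A ≤ m) (c : ℝ) : psize (padTo A m c) = m := by
  rw [padTo, psize_add, psize_single]
  omega

lemma abs_rankSum_padTo_add_nsmul_sub_le {β : ℝ} (hβ0 : 0 ≤ β) (hβ1 : β < 1) {A Z : ℝ →₀ ℕ}
    {c : ℝ} (hA : ∀ x ∈ A.support, x ≤ c) (hZ : ∀ x ∈ Z.support, x ≤ c) (m n : ℕ) :
    |rankSum β (ranked (padTo A m c + n • Z)) - rankSum β (ranked (A + n • Z))|
      ≤ |c| * (β ^ (n * psize Z) / (1 - β)) := by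
  rw [padTo, add_right_comm]
  refine abs_rankSum_add_single_sub_le hβ0 hβ1 (fun x hx => ?_) _
    (by rw [psize_add, psize_nsmul]; omega)
  rcases mem_union.mp (support_add_nsmul_subset A Z n hx) with h | h
  exacts [hA x h, hZ x h]

lemma getD_ranked_padTo_mem_or_eq {W : Set ℝ} {A : ℝ →₀ ℕ} (hA : ∀ w, A w ≠ 0 → w ∈ W)
    {m j : ℕ} (hAm : psize A ≤ m) (hj : j < m) (c : ℝ) :
    (ranked (padTo A m c)).getD j 0 ∈ W ∨ (ranked (padTo A m c)).getD j 0 = c := by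
  have hmem := Finsupp.support_add (getD_mem_support ((psize_padTo hAm c).symm ▸ hj))
  rcases mem_union.mp hmem with h | h
  · exact Or.inl (hA _ (Finsupp.mem_support_iff.mp h))
  · exact Or.inr (mem_singleton.mp (Finsupp.support_single_subset h))

end Population

section Comparison

open Filter

variable {β : ℝ}

lemma sub_sum_mul_le_sum_mul {ι : Type*} {s : Finset ι} {w D : ι → ℝ} {i₀ : ι} (hi₀ : i₀ ∈ s)
    (hw : ∀ i ∈ s, 0 ≤ w i) {g E : ℝ} (hD : ∀ i ∈ s, -E ≤ D i) (hg : g ≤ D i₀) (hE : 0 ≤ E) :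
    w i₀ * g - (∑ i ∈ s, w i) * E ≤ ∑ i ∈ s, w i * D i := by
  have hsingle : w i₀ * (D i₀ + E) ≤ ∑ i ∈ s, w i * (D i + E) :=
    single_le_sum (f := fun i => w i * (D i + E))
      (fun i hi => mul_nonneg (hw i hi) (by linarith [hD i hi])) hi₀
  have hsplit : ∑ i ∈ s, w i * (D i + E) = ∑ i ∈ s, w i * D i + (∑ i ∈ s, w i) * E := by
    rw [sum_mul, ← sum_add_distrib]
    exact sum_congr rfl fun _ _ => mul_add _ _ _
  have := mul_le_mul_of_nonneg_left (show g ≤ D i₀ + E by linarith) (hw i₀ hi₀)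
  linarith

lemma neg_le_geomTail_countP_sub (hβ0 : 0 ≤ β) (hβ1 : β < 1) {P Q Z : ℝ →₀ ℕ} {k : ℕ}
    (hk : k < psize Q) (hpre : ∀ j < k, (ranked P).getD j 0 = (ranked Q).getD j 0)
    {t : ℕ} (ht : t ≤ (ranked Z).countP (· ≤ (ranked P).getD k 0)) (n M : ℕ) (s : ℝ) :
    -(β ^ (n * t) / (1 - β)) ≤ geomTail β ((ranked (P + n • Z)).countP (· ≤ s)) M
      - geomTail β ((ranked (Q + n • Z)).countP (· ≤ s)) M := by
  have hbound : 0 ≤ β ^ (n * t) / (1 - β) := div_nonneg (pow_nonneg hβ0 _) (by linarith)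
  rw [countP_ranked_add_nsmul, countP_ranked_add_nsmul]
  rcases lt_or_ge s ((ranked P).getD k 0) with hs | hs
  · have hcount := countP_le_countP_of_getD_eq (ranked_pairwise P) (ranked_pairwise Q)
      (by rwa [length_ranked]) hpre hs
    linarith [geomTail_antitone hβ0 M (Nat.add_le_add_right hcount (n * (ranked Z).countP (· ≤ s)))]
  · have hZs : t ≤ (ranked Z).countP (· ≤ s) :=
      ht.trans (List.countP_mono_left fun x _ hx => by
        simp only [decide_eq_true_eq] at hx ⊢; linarith)
    have hpow : β ^ ((ranked Q).countP (· ≤ s) + n * (ranked Z).countP (· ≤ s)) ≤ β ^ (n * t) :=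
      pow_le_pow_of_le_one hβ0 hβ1.le (le_add_left (Nat.mul_le_mul_left n hZs))
    linarith [geomTail_le hβ0 hβ1 ((ranked Q).countP (· ≤ s) + n * (ranked Z).countP (· ≤ s)) M,
      div_le_div_of_nonneg_right hpow (by linarith : 0 ≤ 1 - β),
      geomTail_nonneg hβ0 ((ranked P).countP (· ≤ s) + n * (ranked Z).countP (· ≤ s)) M]

lemma pow_le_geomTail_countP_sub (hβ0 : 0 ≤ β) (hβ1 : β ≤ 1) {P Q Z : ℝ →₀ ℕ} {k : ℕ}
    (hPQ : psize P = psize Q) (hk : k < psize P)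
    (hlt : (ranked Q).getD k 0 < (ranked P).getD k 0) (n : ℕ) :
    β ^ (psize P + n * (ranked Z).countP (· ≤ (ranked Q).getD k 0))
      ≤ geomTail β ((ranked (P + n • Z)).countP (· ≤ (ranked Q).getD k 0)) (psize (P + n • Z))
        - geomTail β ((ranked (Q + n • Z)).countP (· ≤ (ranked Q).getD k 0))
            (psize (P + n • Z)) := by
  set b := (ranked Q).getD k 0
  have hP : (ranked P).countP (· ≤ b) ≤ k := not_lt.mp fun h => not_le.mpr hlt
    ((getD_le_iff_lt_countP (ranked_pairwise P) b (by rwa [length_ranked])).mpr h)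
  have hQ : k < (ranked Q).countP (· ≤ b) :=
    (getD_le_iff_lt_countP (ranked_pairwise Q) b (by rw [length_ranked]; omega)).mp le_rfl
  have hQP : (ranked Q).countP (· ≤ b) ≤ psize P := hPQ ▸ length_ranked Q ▸ List.countP_le_length
  have hZ : (ranked Z).countP (· ≤ b) ≤ psize Z := length_ranked Z ▸ List.countP_le_length
  rw [countP_ranked_add_nsmul, countP_ranked_add_nsmul]
  refine (pow_le_pow_of_le_one hβ0 hβ1 (by omega)).trans (pow_le_geomTail_sub hβ0 (by omega) ?_)
  rw [psize_add, psize_nsmul]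
  exact add_le_add hQP (Nat.mul_le_mul_left n hZ)

lemma eventually_mul_pow_lt (hβ0 : 0 < β) (hβ1 : β < 1) {g : ℝ} (hg : 0 < g) (K : ℝ)
    (m t : ℕ) : ∀ᶠ n in atTop, K * β ^ (n * (t + 1)) < g * β ^ (m + n * t) := by
  have hlim : Tendsto (fun n => K * β ^ n) atTop (nhds 0) := by
    simpa using (tendsto_pow_atTop_nhds_zero_of_lt_one hβ0.le hβ1).const_mul K
  filter_upwards [hlim.eventually (gt_mem_nhds (by positivity : 0 < g * β ^ m))] with n hn
  calc K * β ^ (n * (t + 1)) = K * β ^ n * β ^ (n * t) := by ring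
    _ < g * β ^ m * β ^ (n * t) := mul_lt_mul_of_pos_right hn (pow_pos hβ0 _)
    _ = g * β ^ (m + n * t) := by ring

lemma exists_getD_lt_getD_succ {SL : List ℝ} (hSL : SL.Pairwise (· < ·)) {x y : ℝ}
    (hx : x ∈ SL) (hy : y ∈ SL) (hxy : x < y) :
    ∃ i, i + 1 < SL.length ∧ SL.getD i 0 = x ∧ x < SL.getD (i + 1) 0 := by
  obtain ⟨i, hi, rfl⟩ := List.mem_iff_getElem.mp hx
  obtain ⟨j, hj, rfl⟩ := List.mem_iff_getElem.mp hy
  have hmono := hSL.sortedLT.strictMono_get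
  have hij : i < j := hmono.lt_iff_lt (a := ⟨i, hi⟩) (b := ⟨j, hj⟩) |>.mp hxy
  refine ⟨i, by omega, List.getD_eq_getElem _ _ hi, ?_⟩
  rw [List.getD_eq_getElem _ _ (by omega)]
  exact hmono (a := ⟨i, hi⟩) (b := ⟨i + 1, by omega⟩) (Nat.lt_succ_self i)

lemma exists_le_rankSum_add_nsmul_sub (hβ0 : 0 < β) (hβ1 : β < 1) {P Q Z : ℝ →₀ ℕ} {k : ℕ}
    (hPQ : psize P = psize Q) (hk : k < psize P)
    (hpre : ∀ j < k, (ranked P).getD j 0 = (ranked Q).getD j 0) {z : ℝ} (hz : z ∈ Z.support)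
    (hbz : (ranked Q).getD k 0 < z) (hza : z ≤ (ranked P).getD k 0) :
    ∃ g > 0, ∃ K, ∀ n : ℕ,
      g * β ^ (psize P + n * (ranked Z).countP (· ≤ (ranked Q).getD k 0))
        - K * β ^ (n * ((ranked Z).countP (· ≤ (ranked Q).getD k 0) + 1))
      ≤ rankSum β (ranked (P + n • Z)) - rankSum β (ranked (Q + n • Z)) := by
  set a := (ranked P).getD k 0
  set b := (ranked Q).getD k 0
  set t := (ranked Z).countP (· ≤ b)
  have hta : t + 1 ≤ (ranked Z).countP (· ≤ a) :=
    countP_lt_countP_of_mem (fun x _ hx => by simp only [decide_eq_true_eq] at hx ⊢; linarith)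
      (mem_ranked.mpr hz) (by simpa using hza) (by simpa using hbz)
  set S := P.support ∪ Q.support ∪ Z.support
  set SL := S.sort (· ≤ ·)
  have hSL : SL.Pairwise (· < ·) := (sortedLT_sort S).pairwise
  have hmem : ∀ x ∈ S, x ∈ SL := fun x hx => (mem_sort _).mpr hx
  obtain ⟨i₀, hi₀, hb, hgap⟩ := exists_getD_lt_getD_succ hSL
    (hmem b (mem_union_left _ (mem_union_right _ (getD_mem_support (hPQ ▸ hk)))))
    (hmem a (mem_union_left _ (mem_union_left _ (getD_mem_support hk)))) (hbz.trans_le hza)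
  set w : ℕ → ℝ := fun i => SL.getD (i + 1) 0 - SL.getD i 0
  refine ⟨w i₀, by simp only [w]; linarith, (∑ i ∈ range (SL.length - 1), w i) / (1 - β),
    fun n => ?_⟩
  rw [rankSum_sub_rankSum_eq β hSL (ranked_pairwise _) (ranked_pairwise _)
    (by simp only [length_ranked, psize_add, psize_nsmul, hPQ])
    (fun x hx => hmem x (union_subset_union subset_union_left subset_rfl
      (support_add_nsmul_subset _ _ _ (mem_ranked.mp hx))))
    (fun x hx => hmem x (union_subset_union subset_union_right subset_rfl
      (support_add_nsmul_subset _ _ _ (mem_ranked.mp hx)))),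
    length_ranked, div_mul_eq_mul_div, mul_div_assoc]
  exact sub_sum_mul_le_sum_mul (mem_range.mpr (by omega))
    (fun i hi => sub_nonneg.mpr (getD_mono_of_pairwise (hSL.imp le_of_lt) (Nat.le_succ i)
      (by rw [mem_range] at hi; omega)))
    (fun i _ => neg_le_geomTail_countP_sub hβ0.le hβ1 (hPQ ▸ hk) hpre hta n _ _)
    (hb ▸ pow_le_geomTail_countP_sub hβ0.le hβ1.le hPQ hk (hbz.trans_le hza) n)
    (div_nonneg (pow_nonneg hβ0.le _) (sub_nonneg.mpr hβ1.le))

theorem eventually_lt_rankSum_add_nsmul_sub (hβ0 : 0 < β) (hβ1 : β < 1) {P Q Z : ℝ →₀ ℕ}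
    {k : ℕ} (hPQ : psize P = psize Q) (hk : k < psize P)
    (hpre : ∀ j < k, (ranked P).getD j 0 = (ranked Q).getD j 0) {z : ℝ} (hz : z ∈ Z.support)
    (hbz : (ranked Q).getD k 0 < z) (hza : z ≤ (ranked P).getD k 0) (C : ℝ) :
    ∀ᶠ n in atTop, C * β ^ (n * psize Z)
      < rankSum β (ranked (P + n • Z)) - rankSum β (ranked (Q + n • Z)) := by
  obtain ⟨g, hg, K, hK⟩ := exists_le_rankSum_add_nsmul_sub hβ0 hβ1 hPQ hk hpre hz hbz hza
  set t := (ranked Z).countP (· ≤ (ranked Q).getD k 0)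
  have htZ : t + 1 ≤ psize Z := length_ranked Z ▸
    List.countP_lt_length_iff.mpr ⟨z, mem_ranked.mpr hz, by simpa using hbz⟩
  filter_upwards [eventually_mul_pow_lt hβ0 hβ1 hg (K + |C|) (psize P) t] with n hn
  have hC : C * β ^ (n * psize Z) ≤ |C| * β ^ (n * (t + 1)) :=
    mul_le_mul (le_abs_self C) (pow_le_pow_of_le_one hβ0.le hβ1.le (Nat.mul_le_mul_left n htZ))
      (pow_nonneg hβ0.le _) (abs_nonneg C)
  linarith [hK n]

end Comparison

lemma exists_mem_support_between {W : Set ℝ} {Z : ℝ →₀ ℕ}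
    (hcov : ∀ w₁ ∈ W, ∀ w₂ ∈ W, w₁ < w₂ → ∃ z, Z z ≠ 0 ∧ w₁ < z ∧ z < w₂)
    {c a b : ℝ} (hc : c ∈ Z.support) (hWc : ∀ w ∈ W, w < c) (ha : a ∈ W ∨ a = c)
    (hb : b ∈ W ∨ b = c) (hba : b < a) : ∃ z ∈ Z.support, b < z ∧ z ≤ a := by
  rcases ha with ha | rfl
  · rcases hb with hb | rfl
    · obtain ⟨z, hz, hbz, hza⟩ := hcov b hb a ha hba
      exact ⟨z, Finsupp.mem_support_iff.mpr hz, hbz, hza.le⟩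
    · exact absurd (hWc a ha) hba.not_gt
  · exact ⟨a, hc, hba, le_rfl⟩

theorem stmt_15_general (β : ℝ) (hβ0 : 0 < β) (hβ1 : β < 1)
    (V : (ℝ →₀ ℕ) → ℝ)
    (hV : ∀ X : ℝ →₀ ℕ, V X = vrd (fun k => β ^ k) X)
    (W : Set ℝ) (Z₀ : ℝ →₀ ℕ) (hZ₀ : Z₀ ≠ 0)
    (hcovA : ∀ w₁ ∈ W, ∀ w₂ ∈ W, w₁ < w₂ → ∃ z, Z₀ z ≠ 0 ∧ w₁ < z ∧ z < w₂)
    (hcovC : ∃ z, Z₀ z ≠ 0 ∧ ∀ w ∈ W, w < z)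
    (c : ℝ) (hc : c = Z₀.support.max' (Finsupp.support_nonempty_iff.mpr hZ₀))
    (X Y : ℝ →₀ ℕ)
    (hXW : ∀ w : ℝ, X w ≠ 0 → w ∈ W) (hYW : ∀ w : ℝ, Y w ≠ 0 → w ∈ W)
    (hCLL : CLLBetter c X Y) :
    ∃ N : ℕ, ∀ n : ℕ, n ≥ N → V (X + n • Z₀) > V (Y + n • Z₀) := by
  obtain ⟨k, hk, hpre, hba⟩ := hCLL
  have hZc : ∀ z ∈ Z₀.support, z ≤ c := fun z hz => hc ▸ le_max' _ z hz
  have hWc : ∀ w ∈ W, w < c := by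
    obtain ⟨z, hz, hzW⟩ := hcovC
    exact fun w hw => (hzW w hw).trans_le (hZc z (Finsupp.mem_support_iff.mpr hz))
  have hXc : ∀ x ∈ X.support, x ≤ c :=
    fun x hx => (hWc x (hXW x (Finsupp.mem_support_iff.mp hx))).le
  have hYc : ∀ y ∈ Y.support, y ≤ c :=
    fun y hy => (hWc y (hYW y (Finsupp.mem_support_iff.mp hy))).le
  obtain ⟨z, hz, hbz, hza⟩ := exists_mem_support_between hcovA (hc ▸ max'_mem _ _) hWc
    (getD_ranked_padTo_mem_or_eq hXW (le_max_left _ _) hk c)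
    (getD_ranked_padTo_mem_or_eq hYW (le_max_right _ _) hk c) hba
  obtain ⟨N, hN⟩ := Filter.eventually_atTop.mp <| eventually_lt_rankSum_add_nsmul_sub hβ0 hβ1
    ((psize_padTo (le_max_left _ _) c).trans (psize_padTo (le_max_right _ _) c).symm)
    ((psize_padTo (le_max_left _ _) c).symm ▸ hk) hpre hz hbz hza (2 * |c| / (1 - β))
  refine ⟨N, fun n hn => ?_⟩
  set m := max (psize X) (psize Y)
  have hX := abs_le.mp (abs_rankSum_padTo_add_nsmul_sub_le hβ0.le hβ1 hXc hZc m n)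
  have hY := abs_le.mp (abs_rankSum_padTo_add_nsmul_sub_le hβ0.le hβ1 hYc hZc m n)
  have hC : 2 * |c| / (1 - β) * β ^ (n * psize Z₀)
      = 2 * (|c| * (β ^ (n * psize Z₀) / (1 - β))) := by ring
  rw [hV, hV, vrd_pow_eq_rankSum, vrd_pow_eq_rankSum]
  linarith [hN n hn]

theorem stmt_15 (β : ℝ) (hβ0 : 0 < β) (hβ1 : β < 1)
    (V : (ℝ →₀ ℕ) → ℝ)
    (hV : ∀ X : ℝ →₀ ℕ, V X = vrd (fun k => β ^ k) X)
    (W : Set ℝ) (Z₀ : ℝ →₀ ℕ) (hZ₀ : Z₀ ≠ 0)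
    (hcovA : ∀ w₁ ∈ W, ∀ w₂ ∈ W, w₁ < w₂ → ∃ z, Z₀ z ≠ 0 ∧ w₁ < z ∧ z < w₂)
    (hcovB : ∃ z, Z₀ z ≠ 0 ∧ ∀ w ∈ W, z < w)
    (hcovC : ∃ z, Z₀ z ≠ 0 ∧ ∀ w ∈ W, w < z)
    (c : ℝ) (hc : c = Z₀.support.max' (Finsupp.support_nonempty_iff.mpr hZ₀))
    (X Y : ℝ →₀ ℕ) (hX : X ≠ 0) (hY : Y ≠ 0)
    (hXW : ∀ w : ℝ, X w ≠ 0 → w ∈ W) (hYW : ∀ w : ℝ, Y w ≠ 0 → w ∈ W)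
    (hCLL : CLLBetter c X Y) :
    ∃ N : ℕ, ∀ n : ℕ, n ≥ N → V (X + n • Z₀) > V (Y + n • Z₀) :=
  stmt_15_general β hβ0 hβ1 V hV W Z₀ hZ₀ hcovA hcovC c hc X Y hXW hYW hCLL
end
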